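/- arXiv:2208.02478 — 4 statements merged into one kernel-verified Lean document; each statement's English description precedes it below -/
import Mathlib

section
/- Let V be a vector space of dimension exactly r over a field, and for each i ∈ {1,…,r} let p_{i,+}, p_{i,-} ∈ V be vectors such that the 2r vectors {p_{i,j} : 1 ≤ i ≤ r, j ∈ {+,-}} span V. If for every choice function σ : {1,…,r} → {+,-} the r vectors (p_{i,σ(i)})_{i=1,…,r} are linearly dependent, then there exists a subset I ⊆ {1,…,r} of some cardinality k < r such that the span of the 2k vectors {p_{i,j} : i ∈ I, j ∈ {+,-}} has dimension strictly less than k. -/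
open Module Submodule Finset

section
variable {K V : Type*} [Field K] [AddCommGroup V] [Module K V] [FiniteDimensional K V]
  {r : ℕ}

/-- span of the pairs over an index set -/
private def PSp (p : Fin r → Bool → V) (I : Finset (Fin r)) : Submodule K V :=
  Submodule.span K {v : V | ∃ i ∈ I, ∃ j : Bool, p i j = v}

private lemma PSp_mono (p : Fin r → Bool → V) {I I' : Finset (Fin r)} (h : I ⊆ I') :
    (PSp p I : Submodule K V) ≤ PSp p I' := by
  apply Submodule.span_mono
  rintro v ⟨i, hi, j, hj⟩
  exact ⟨i, h hi, j, hj⟩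

private lemma PSp_union (p : Fin r → Bool → V) (I I' : Finset (Fin r)) :
    (PSp p (I ∪ I') : Submodule K V) = PSp p I ⊔ PSp p I' := by
  unfold PSp
  rw [← Submodule.span_union]
  congr 1
  ext v
  constructor
  · rintro ⟨i, hi, j, hj⟩
    rcases Finset.mem_union.1 hi with h | h
    · exact Or.inl ⟨i, h, j, hj⟩
    · exact Or.inr ⟨i, h, j, hj⟩
  · rintro (⟨i, hi, j, hj⟩ | ⟨i, hi, j, hj⟩)
    · exact ⟨i, Finset.mem_union_left _ hi, j, hj⟩
    · exact ⟨i, Finset.mem_union_right _ hi, j, hj⟩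

private lemma PSp_insert (p : Fin r → Bool → V) (i₀ : Fin r) (I : Finset (Fin r)) :
    (PSp p (insert i₀ I) : Submodule K V)
      = PSp p I ⊔ span K {p i₀ true} ⊔ span K {p i₀ false} := by
  unfold PSp
  rw [← Submodule.span_union, ← Submodule.span_union]
  congr 1
  ext v
  constructor
  · rintro ⟨i, hi, j, hj⟩
    rcases Finset.mem_insert.1 hi with h | h
    · subst h
      cases j
      · exact Or.inr (by simpa using hj.symm)
      · exact Or.inl (Or.inr (by simpa using hj.symm))
    · exact Or.inl (Or.inl ⟨i, h, j, hj⟩)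
  · rintro ((⟨i, hi, j, hj⟩ | h) | h)
    · exact ⟨i, Finset.mem_insert_of_mem hi, j, hj⟩
    · exact ⟨i₀, Finset.mem_insert_self _ _, true, (Set.mem_singleton_iff.1 h).symm⟩
    · exact ⟨i₀, Finset.mem_insert_self _ _, false, (Set.mem_singleton_iff.1 h).symm⟩

end

section
variable {K V : Type*} [Field K] [AddCommGroup V] [Module K V] [FiniteDimensional K V]
  {r : ℕ}

private lemma PSp_empty (p : Fin r → Bool → V) : (PSp p ∅ : Submodule K V) = ⊥ := by
  unfold PSp
  convert Submodule.span_empty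
  ext v; simp

private lemma finrank_sup_span_singleton (W : Submodule K V) {x : V} (hx : x ∉ W) :
    finrank K ↥(W ⊔ span K {x}) = finrank K W + 1 := by
  have hlt : W < W ⊔ span K {x} :=
    left_lt_sup.2 fun h => hx ((Submodule.span_singleton_le_iff_mem x W).1 h)
  have h1 := Submodule.finrank_lt_finrank_of_lt hlt
  have h2 := Submodule.finrank_sup_add_finrank_inf_eq W (span K {x})
  have hx0 : x ≠ 0 := fun h => hx (h ▸ W.zero_mem)
  have h3 : finrank K ↥(span K {x}) = 1 := finrank_span_singleton hx0
  omega

private lemma choose_good (p : Fin r → Bool → V) (W : Submodule K V)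
    (i₀ : Fin r) (s' : Finset (Fin r)) (hi₀ : i₀ ∉ s')
    (H : ∀ I ⊆ insert i₀ s',
      I.card + finrank K W ≤ finrank K ↥(PSp p I ⊔ W)) :
    ∃ j : Bool, p i₀ j ∉ W ∧ ∀ I ⊆ s',
      I.card + (finrank K W + 1)
        ≤ finrank K ↥(PSp p I ⊔ (W ⊔ span K {p i₀ j})) := by
  have h1 : ∀ I ⊆ s', I.card + 1 + finrank K W
      ≤ finrank K ↥(PSp p I ⊔ span K {p i₀ true} ⊔ span K {p i₀ false} ⊔ W) := by
    intro I hI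
    have h2 := H (insert i₀ I) (Finset.insert_subset_insert _ hI)
    rw [Finset.card_insert_of_notMem (fun h => hi₀ (hI h)), PSp_insert] at h2
    omega
  by_contra hcon
  push_neg at hcon
  by_cases ha : p i₀ true ∈ W <;> by_cases hb : p i₀ false ∈ W
  · -- both in W : contradiction with h1 ∅
    have h2 := h1 ∅ (Finset.empty_subset _)
    have hle : (PSp p ∅ ⊔ span K {p i₀ true} ⊔ span K {p i₀ false} ⊔ W : Submodule K V) ≤ W := by
      rw [PSp_empty]
      exact sup_le (sup_le (sup_le bot_le
        ((Submodule.span_singleton_le_iff_mem (p i₀ true) W).2 ha))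
        ((Submodule.span_singleton_le_iff_mem (p i₀ false) W).2 hb)) le_rfl
    have := Submodule.finrank_mono hle
    simp only [Finset.card_empty] at h2
    omega
  · -- p i₀ true ∈ W, b ∉ W
    obtain ⟨I, hI, hlt⟩ := hcon false hb
    have h2 := h1 I hI
    have hle : (PSp p I ⊔ span K {p i₀ true} ⊔ span K {p i₀ false} ⊔ W : Submodule K V)
        ≤ PSp p I ⊔ (W ⊔ span K {p i₀ false}) := by
      refine sup_le (sup_le (sup_le le_sup_left ?_) ?_) ?_
      · exact le_trans ((Submodule.span_singleton_le_iff_mem (p i₀ true) W).2 ha)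
          (le_trans le_sup_left le_sup_right)
      · exact le_trans le_sup_right le_sup_right
      · exact le_trans le_sup_left le_sup_right
    have := Submodule.finrank_mono hle
    omega
  · -- a ∉ W, p i₀ false ∈ W
    obtain ⟨I, hI, hlt⟩ := hcon true ha
    have h2 := h1 I hI
    have hle : (PSp p I ⊔ span K {p i₀ true} ⊔ span K {p i₀ false} ⊔ W : Submodule K V)
        ≤ PSp p I ⊔ (W ⊔ span K {p i₀ true}) := by
      refine sup_le (sup_le (sup_le le_sup_left ?_) ?_) ?_
      · exact le_trans le_sup_right le_sup_right
      · exact le_trans ((Submodule.span_singleton_le_iff_mem (p i₀ false) W).2 hb)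
          (le_trans le_sup_left le_sup_right)
      · exact le_trans le_sup_left le_sup_right
    have := Submodule.finrank_mono hle
    omega
  · -- both not in W : submodularity argument
    obtain ⟨Ia, hIa, hlta⟩ := hcon true ha
    obtain ⟨Ib, hIb, hltb⟩ := hcon false hb
    set A := (PSp p Ia ⊔ (W ⊔ span K {p i₀ true}) : Submodule K V) with hA
    set B := (PSp p Ib ⊔ (W ⊔ span K {p i₀ false}) : Submodule K V) with hB
    have key := Submodule.finrank_sup_add_finrank_inf_eq A B
    have hsup : (PSp p (Ia ∪ Ib) ⊔ span K {p i₀ true} ⊔ span K {p i₀ false} ⊔ W : Submodule K V)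
        ≤ A ⊔ B := by
      rw [PSp_union]
      refine sup_le (sup_le (sup_le (sup_le ?_ ?_) ?_) ?_) ?_
      · exact le_trans le_sup_left le_sup_left
      · exact le_trans le_sup_left le_sup_right
      · exact le_trans (le_trans le_sup_right le_sup_right) le_sup_left
      · exact le_trans (le_trans le_sup_right le_sup_right) le_sup_right
      · exact le_trans (le_trans le_sup_left le_sup_right) le_sup_left
    have hinf : (PSp p (Ia ∩ Ib) ⊔ W : Submodule K V) ≤ A ⊓ B := by
      refine le_inf (sup_le ?_ ?_) (sup_le ?_ ?_)
      · exact le_trans (PSp_mono p Finset.inter_subset_left) le_sup_left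
      · exact le_trans le_sup_left le_sup_right
      · exact le_trans (PSp_mono p Finset.inter_subset_right) le_sup_left
      · exact le_trans le_sup_left le_sup_right
    have h2 := h1 (Ia ∪ Ib) (Finset.union_subset hIa hIb)
    have h3 := H (Ia ∩ Ib)
      (le_trans (le_trans Finset.inter_subset_left hIa) (Finset.subset_insert _ _))
    have h4 := Submodule.finrank_mono hsup
    have h5 := Submodule.finrank_mono hinf
    have hcard := Finset.card_union_add_card_inter Ia Ib
    omega

end

section
variable {K V : Type*} [Field K] [AddCommGroup V] [Module K V] [FiniteDimensional K V]
  {r : ℕ}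

private lemma rado (p : Fin r → Bool → V) :
    ∀ (n : ℕ) (s : Finset (Fin r)) (W : Submodule K V), s.card = n →
    (∀ I ⊆ s, I.card + finrank K W ≤ finrank K ↥(PSp p I ⊔ W)) →
    ∃ σ : Fin r → Bool, ∀ g : Fin r → K,
      (∑ i ∈ s, g i • p i (σ i)) ∈ W → ∀ i ∈ s, g i = 0 := by
  intro n
  induction n with
  | zero =>
    intro s W hcard _
    rw [Finset.card_eq_zero] at hcard
    subst hcard
    exact ⟨fun _ => true, fun g _ i hi => absurd hi (Finset.notMem_empty i)⟩
  | succ n ih =>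
    intro s W hcard H
    obtain ⟨i₀, hi₀s⟩ : s.Nonempty := Finset.card_pos.1 (by omega)
    set s' := s.erase i₀ with hs'
    have hi₀ : i₀ ∉ s' := Finset.notMem_erase _ _
    have hins : insert i₀ s' = s := Finset.insert_erase hi₀s
    have hcard' : s'.card = n := by
      rw [hs', Finset.card_erase_of_mem hi₀s, hcard]
      omega
    obtain ⟨j, hxW, hcond⟩ := choose_good p W i₀ s' hi₀ (by rw [hins]; exact H)
    set x := p i₀ j with hx
    set W' := (W ⊔ span K {x} : Submodule K V) with hW'
    have hW'rank : finrank K ↥W' = finrank K W + 1 := finrank_sup_span_singleton W hxW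
    obtain ⟨σ', hσ'⟩ := ih s' W' hcard' (fun I hI => by
      rw [hW'rank]; exact hcond I hI)
    refine ⟨fun i => if i = i₀ then j else σ' i, fun g hg i hi => ?_⟩
    -- rewrite the sum
    have hsum : (∑ i ∈ s, g i • p i (if i = i₀ then j else σ' i))
        = g i₀ • x + ∑ i ∈ s', g i • p i (σ' i) := by
      rw [← Finset.add_sum_erase s _ hi₀s, if_pos rfl, ← hs']
      congr 1
      exact Finset.sum_congr rfl fun i hi => by
        rw [if_neg (Finset.ne_of_mem_erase hi)]
    rw [hsum] at hg
    have hg' : (∑ i ∈ s', g i • p i (σ' i)) ∈ W' := by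
      have h1 : g i₀ • x + ∑ i ∈ s', g i • p i (σ' i) ∈ W' := le_sup_left (α := Submodule K V) hg
      have h2 : g i₀ • x ∈ W' :=
        Submodule.smul_mem _ _ (le_sup_right (α := Submodule K V)
          (Submodule.mem_span_singleton_self x))
      simpa using W'.sub_mem h1 h2
    have hzero : ∀ i ∈ s', g i = 0 := hσ' g hg'
    have hsum0 : (∑ i ∈ s', g i • p i (σ' i)) = 0 :=
      Finset.sum_eq_zero fun i hi => by rw [hzero i hi, zero_smul]
    rw [hsum0, add_zero] at hg
    have hgi₀ : g i₀ = 0 := by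
      by_contra hne
      exact hxW (by
        have := W.smul_mem (g i₀)⁻¹ hg
        rwa [smul_smul, inv_mul_cancel₀ hne, one_smul] at this)
    rcases Finset.mem_insert.1 (hins ▸ hi) with h | h
    · exact h ▸ hgi₀
    · exact hzero i h
end

/-- Theorem A.1 of the paper, hard direction (*) ⇒ (**), for `dim V = r`:
if every transversal choice of one vector from each of the `r` pairs is linearly
dependent, then some subset `I` of cardinality `k < r` has its `2k` vectors
spanning a subspace of dimension `< k`. -/
theorem stmt1 {K V : Type*} [Field K] [AddCommGroup V] [Module K V]
    [FiniteDimensional K V]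
    (r : ℕ) (hr : 1 ≤ r) (hdim : Module.finrank K V = r)
    (p : Fin r → Bool → V)
    (hspan : Submodule.span K (Set.range fun x : Fin r × Bool => p x.1 x.2) = ⊤)
    (hdep : ∀ σ : Fin r → Bool,
      ¬ LinearIndependent K (fun i : Fin r => p i (σ i))) :
    ∃ I : Finset (Fin r), I.card < r ∧
      Module.finrank K
        (Submodule.span K {v : V | ∃ i ∈ I, ∃ j : Bool, p i j = v}) < I.card := by
  by_contra hcon
  push_neg at hcon
  -- the hypothesis of Rado's lemma holds
  have H : ∀ I ⊆ (Finset.univ : Finset (Fin r)),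
      I.card + finrank K (⊥ : Submodule K V) ≤ finrank K ↥(PSp (K := K) p I ⊔ ⊥) := by
    intro I _
    rw [finrank_bot, sup_bot_eq, add_zero]
    rcases lt_or_ge I.card r with h | h
    · exact hcon I h
    · have hIr : I.card = r := le_antisymm (by simpa using I.card_le_univ) h
      have huniv : I = Finset.univ := Finset.eq_univ_of_card I (by simpa using hIr)
      have hset : {v : V | ∃ i ∈ I, ∃ j : Bool, p i j = v}
          = Set.range fun x : Fin r × Bool => p x.1 x.2 := by
        ext v
        constructor
        · rintro ⟨i, _, j, hj⟩; exact ⟨(i, j), hj⟩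
        · rintro ⟨⟨i, j⟩, hj⟩; exact ⟨i, huniv ▸ Finset.mem_univ i, j, hj⟩
      unfold PSp
      rw [hset, hspan, finrank_top, hdim, hIr]
  obtain ⟨σ, hσ⟩ := rado p (Finset.univ.card) Finset.univ ⊥ rfl H
  refine hdep σ (Fintype.linearIndependent_iff.2 fun g hg i => ?_)
  exact hσ g (by rw [hg]; exact Submodule.zero_mem _) i (Finset.mem_univ i)
end

section
/- Let V be a vector space of dimension r over a field, and for each i ∈ {1,…,r} let p_{i,+}, p_{i,-} ∈ V be such that the 2r vectors span V. Then the following are equivalent: (1) for every choice function σ : {1,…,r} → {+,-}, the r vectors (p_{i,σ(i)}) are linearly dependent; (2) there exists a subset I ⊆ {1,…,r} of cardinality k < r such that dim span{p_{i,j} : i ∈ I, j ∈ {+,-}} < k. -/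
open Submodule Module


lemma aux_finrank_map_mkQ {K V : Type*} [Field K] [AddCommGroup V] [Module K V]
    [FiniteDimensional K V] (W P : Submodule K V) (h : W ≤ P) :
    finrank K (P.map W.mkQ) + finrank K W = finrank K P := by
  have h1 := LinearMap.finrank_range_add_finrank_ker (W.mkQ.domRestrict P)
  rw [LinearMap.range_domRestrict] at h1
  have h2 : LinearMap.ker (W.mkQ.domRestrict P) = W.comap P.subtype := by
    ext x
    simp [LinearMap.mem_ker, Submodule.Quotient.mk_eq_zero]
  rw [h2, (Submodule.comapSubtypeEquivOfLe h).finrank_eq] at h1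
  exact h1

lemma aux_combine {K V : Type*} [Field K] [AddCommGroup V] [Module K V]
    {ι : Type*} [Fintype ι] [DecidableEq ι] (s : Finset ι) (W : Submodule K V) (v : ι → V)
    (hmem : ∀ i ∈ s, v i ∈ W)
    (h1 : LinearIndependent K (fun i : {x // x ∈ s} => v i))
    (h2 : LinearIndependent K (fun i : {x // x ∈ sᶜ} => W.mkQ (v i))) :
    LinearIndependent K v := by
  rw [Fintype.linearIndependent_iff] at h1 h2 ⊢
  intro g hg
  have hq : ∑ i : {x // x ∈ sᶜ}, g i • W.mkQ (v i) = 0 := by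
    have h3 := congrArg W.mkQ hg
    rw [map_sum, map_zero] at h3
    simp only [map_smul] at h3
    rw [← Finset.sum_add_sum_compl s (fun i => g i • W.mkQ (v i))] at h3
    rw [Finset.sum_eq_zero (s := s) (fun i hi => by
      have : W.mkQ (v i) = 0 := (Submodule.Quotient.mk_eq_zero W).2 (hmem i hi)
      rw [this, smul_zero]), zero_add] at h3
    rw [Finset.univ_eq_attach, Finset.sum_attach sᶜ (fun i => g i • W.mkQ (v i))]
    exact h3
  have hc : ∀ i : {x // x ∈ sᶜ}, g i = 0 := h2 _ hq
  have hs : ∑ i : {x // x ∈ s}, g i • v i = 0 := by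
    rw [← Finset.sum_add_sum_compl s (fun i => g i • v i)] at hg
    rw [Finset.sum_eq_zero (s := sᶜ) (fun i hi => by rw [hc ⟨i, hi⟩, zero_smul]), add_zero] at hg
    rw [Finset.univ_eq_attach, Finset.sum_attach s (fun i => g i • v i)]
    exact hg
  have hsz := h1 _ hs
  intro i
  by_cases hi : i ∈ s
  · exact hsz ⟨i, hi⟩
  · exact hc ⟨i, Finset.mem_compl.2 hi⟩


universe u v w

lemma aux_rado (K : Type u) [Field K] :
    ∀ (n : ℕ) (V : Type v) [AddCommGroup V] [Module K V] [FiniteDimensional K V]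
      (ι : Type w) [Fintype ι] [DecidableEq ι], Fintype.card ι = n →
      ∀ (p : ι → Bool → V),
        (∀ s : Finset ι, s.card ≤ finrank K (span K {v : V | ∃ i ∈ s, ∃ b, p i b = v})) →
        ∃ σ : ι → Bool, LinearIndependent K fun i => p i (σ i) := by
  intro n
  induction n using Nat.strong_induction_on with
  | _ n IH =>
  intro V _ _ _ ι _ _ hcard p hp
  rcases Nat.eq_zero_or_pos n with hn | hn
  · subst hn
    haveI : IsEmpty ι := Fintype.card_eq_zero_iff.1 hcard
    exact ⟨fun _ => true, linearIndependent_empty_type⟩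
  -- main case: find s, W, σ1 with the key properties
  obtain ⟨s, W, σ1, hsne, hσ1mem, hσ1ind, hquot⟩ :
      ∃ (s : Finset ι) (W : Submodule K V) (σ1 : ι → Bool), s.Nonempty ∧
        (∀ i ∈ s, p i (σ1 i) ∈ W) ∧
        LinearIndependent K (fun i : {x // x ∈ s} => p i (σ1 i)) ∧
        (∀ t : Finset ι, t ⊆ sᶜ →
          t.card + finrank K W ≤
            finrank K ↥(span K {v : V | ∃ i ∈ t, ∃ b, p i b = v} ⊔ W)) := by
    by_cases hcase : ∃ s : Finset ι, s.Nonempty ∧ s.card < n ∧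
        finrank K (span K {v : V | ∃ i ∈ s, ∃ b, p i b = v}) ≤ s.card
    · -- tight case
      obtain ⟨s, hne, hlt, hle⟩ := hcase
      -- apply IH to the subtype of s
      obtain ⟨σ1', hσ1'⟩ := IH s.card hlt V {x // x ∈ s} (Fintype.card_coe s)
        (fun i b => p i.val b)
        (by
          intro t
          have himg : {v : V | ∃ i ∈ t, ∃ b, p i.val b = v} =
              {v : V | ∃ i ∈ t.image Subtype.val, ∃ b, p i b = v} := by
            ext v
            simp only [Set.mem_setOf_eq, Finset.mem_image]
            constructor
            · rintro ⟨i, hi, b, e⟩; exact ⟨i.val, ⟨i, hi, rfl⟩, b, e⟩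
            · rintro ⟨i, ⟨j, hj, rfl⟩, b, e⟩; exact ⟨j, hj, b, e⟩
          rw [himg, ← Finset.card_image_of_injective t Subtype.val_injective]
          exact hp _)
      refine ⟨s, span K {v : V | ∃ i ∈ s, ∃ b, p i b = v},
        fun i => if h : i ∈ s then σ1' ⟨i, h⟩ else true, hne, ?_, ?_, ?_⟩
      · intro i hi
        show p i (if h : i ∈ s then σ1' ⟨i, h⟩ else true) ∈ _
        rw [dif_pos hi]
        exact subset_span ⟨i, hi, _, rfl⟩
      · show LinearIndependent K fun i : {x // x ∈ s} =>
          p i.val (if h : i.val ∈ s then σ1' ⟨i.val, h⟩ else true)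
        have he : (fun i : {x // x ∈ s} =>
            p i.val (if h : i.val ∈ s then σ1' ⟨i.val, h⟩ else true)) =
            fun i : {x // x ∈ s} => p i.val (σ1' i) := by
          funext i
          rw [dif_pos i.2]
        rw [he]
        exact hσ1'
      · intro t ht
        have hps : {v : V | ∃ i ∈ t, ∃ b, p i b = v} ∪
            {v : V | ∃ i ∈ s, ∃ b, p i b = v} =
            {v : V | ∃ i ∈ t ∪ s, ∃ b, p i b = v} := by
          ext v
          simp only [Set.mem_union, Set.mem_setOf_eq, Finset.mem_union]
          constructor
          · rintro (⟨i, hi, b, e⟩ | ⟨i, hi, b, e⟩)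
            exacts [⟨i, Or.inl hi, b, e⟩, ⟨i, Or.inr hi, b, e⟩]
          · rintro ⟨i, hi | hi, b, e⟩
            exacts [Or.inl ⟨i, hi, b, e⟩, Or.inr ⟨i, hi, b, e⟩]
        have hdisj : Disjoint t s := by
          rw [Finset.disjoint_left]
          intro a hat has
          exact (Finset.mem_compl.1 (ht hat)) has
        calc t.card + finrank K (span K {v : V | ∃ i ∈ s, ∃ b, p i b = v})
            ≤ t.card + s.card := Nat.add_le_add_left hle t.card
          _ = (t ∪ s).card := (Finset.card_union_of_disjoint hdisj).symm
          _ ≤ finrank K (span K {v : V | ∃ i ∈ t ∪ s, ∃ b, p i b = v}) := hp _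
          _ = finrank K ↥(span K {v : V | ∃ i ∈ t, ∃ b, p i b = v} ⊔
              span K {v : V | ∃ i ∈ s, ∃ b, p i b = v}) := by
              rw [← span_union, hps]
    · -- no tight set
      push_neg at hcase
      have hne : Nonempty ι := Fintype.card_pos_iff.1 (hcard ▸ hn)
      obtain ⟨i0⟩ := hne
      have h1 : 1 ≤ finrank K (span K {v : V | ∃ i ∈ ({i0} : Finset ι), ∃ b, p i b = v}) := by
        simpa using hp {i0}
      have hb0 : ∃ b0, p i0 b0 ≠ 0 := by
        by_contra h
        push_neg at h
        have hsub : {v : V | ∃ i ∈ ({i0} : Finset ι), ∃ b, p i b = v} ⊆ {(0 : V)} := by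
          rintro v ⟨i, hi, b, rfl⟩
          rw [Finset.mem_singleton] at hi
          subst hi
          simp [h b]
        have hbot : span K {v : V | ∃ i ∈ ({i0} : Finset ι), ∃ b, p i b = v} ≤ ⊥ := by
          rw [← Submodule.span_zero_singleton K (M := V)]
          exact span_mono hsub
        have h0 : finrank K (span K {v : V | ∃ i ∈ ({i0} : Finset ι), ∃ b, p i b = v}) = 0 := by
          rw [le_bot_iff.1 hbot, finrank_bot]
        omega
      obtain ⟨b0, hb0⟩ := hb0
      refine ⟨{i0}, span K {p i0 b0}, fun _ => b0, Finset.singleton_nonempty i0, ?_, ?_, ?_⟩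
      · intro i hi
        rw [Finset.mem_singleton] at hi
        subst hi
        exact subset_span rfl
      · rw [Fintype.linearIndependent_iff]
        intro g hg j
        have hj : ∀ j : {x // x ∈ ({i0} : Finset ι)}, j = ⟨i0, Finset.mem_singleton_self i0⟩ :=
          fun j => Subtype.ext (Finset.mem_singleton.1 j.2)
        rw [Fintype.sum_eq_single
          (⟨i0, Finset.mem_singleton_self i0⟩ : {x // x ∈ ({i0} : Finset ι)})
          (fun b hb => absurd (hj b) hb)] at hg
        rcases smul_eq_zero.1 hg with h | h
        · rw [hj j]; exact h
        · exact absurd h hb0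
      · intro t ht
        have hW1 : finrank K (span K {p i0 b0}) = 1 := finrank_span_singleton hb0
        have hWle : finrank K (span K {p i0 b0}) ≤
            finrank K ↥(span K {v : V | ∃ i ∈ t, ∃ b, p i b = v} ⊔ span K {p i0 b0}) :=
          Submodule.finrank_mono le_sup_right
        rcases t.eq_empty_or_nonempty with rfl | htne
        · simpa [hW1] using hWle
        · have htlt : t.card < n := by
            have h2 : t.card ≤ ({i0}ᶜ : Finset ι).card := Finset.card_le_card ht
            rw [Finset.card_compl, Finset.card_singleton, hcard] at h2
            omega
          have h4 : t.card < finrank K (span K {v : V | ∃ i ∈ t, ∃ b, p i b = v}) :=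
            hcase t htne htlt
          have h5 : finrank K (span K {v : V | ∃ i ∈ t, ∃ b, p i b = v}) ≤
              finrank K ↥(span K {v : V | ∃ i ∈ t, ∃ b, p i b = v} ⊔ span K {p i0 b0}) :=
            Submodule.finrank_mono le_sup_left
          omega
  -- continuation: quotient by W and apply IH to the complement
  have hmlt : (sᶜ : Finset ι).card < n := by
    rw [Finset.card_compl, hcard]
    have := hsne.card_pos
    omega
  obtain ⟨σ2, hσ2⟩ := IH (sᶜ : Finset ι).card hmlt (V ⧸ W) {x // x ∈ sᶜ}
    (Fintype.card_coe _) (fun i b => W.mkQ (p i.val b))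
    (by
      intro t
      set t' : Finset ι := t.image Subtype.val with ht'
      have ht's : t' ⊆ sᶜ := by
        intro a ha
        rw [ht', Finset.mem_image] at ha
        obtain ⟨j, _, rfl⟩ := ha
        exact j.2
      have himg : {w : V ⧸ W | ∃ i ∈ t, ∃ b, W.mkQ (p i.val b) = w} =
          W.mkQ '' {v : V | ∃ i ∈ t', ∃ b, p i b = v} := by
        ext w
        simp only [Set.mem_setOf_eq, Set.mem_image, ht', Finset.mem_image]
        constructor
        · rintro ⟨i, hi, b, rfl⟩
          exact ⟨p i.val b, ⟨i.val, ⟨i, hi, rfl⟩, b, rfl⟩, rfl⟩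
        · rintro ⟨v, ⟨i, ⟨j, hj, rfl⟩, b, rfl⟩, rfl⟩
          exact ⟨j, hj, b, rfl⟩
      have hmapW : W.map W.mkQ = ⊥ := by
        rw [eq_bot_iff]
        rintro x ⟨y, hy, rfl⟩
        simpa using (Submodule.Quotient.mk_eq_zero W).2 hy
      have hspan : span K {w : V ⧸ W | ∃ i ∈ t, ∃ b, W.mkQ (p i.val b) = w} =
          (span K {v : V | ∃ i ∈ t', ∃ b, p i b = v} ⊔ W).map W.mkQ := by
        rw [himg, Submodule.span_image, Submodule.map_sup, hmapW, sup_bot_eq]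
      have hfr := aux_finrank_map_mkQ W (span K {v : V | ∃ i ∈ t', ∃ b, p i b = v} ⊔ W)
        le_sup_right
      have hcard' : t.card = t'.card :=
        (Finset.card_image_of_injective t Subtype.val_injective).symm
      have hq := hquot t' ht's
      rw [hspan]
      omega)
  classical
  refine ⟨fun i => if h : i ∈ s then σ1 i else σ2 ⟨i, Finset.mem_compl.2 h⟩, ?_⟩
  apply aux_combine s W
  · intro i hi
    show p i (if h : i ∈ s then σ1 i else σ2 ⟨i, Finset.mem_compl.2 h⟩) ∈ W
    rw [dif_pos hi]
    exact hσ1mem i hi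
  · show LinearIndependent K fun i : {x // x ∈ s} =>
      p i.val (if h : i.val ∈ s then σ1 i.val else σ2 ⟨i.val, Finset.mem_compl.2 h⟩)
    have he : (fun i : {x // x ∈ s} =>
        p i.val (if h : i.val ∈ s then σ1 i.val else σ2 ⟨i.val, Finset.mem_compl.2 h⟩)) =
        fun i : {x // x ∈ s} => p i.val (σ1 i.val) := by
      funext i
      rw [dif_pos i.2]
    rw [he]
    exact hσ1ind
  · show LinearIndependent K fun i : {x // x ∈ sᶜ} =>
      W.mkQ (p i.val (if h : i.val ∈ s then σ1 i.val else σ2 ⟨i.val, Finset.mem_compl.2 h⟩))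
    have he : (fun i : {x // x ∈ sᶜ} =>
        W.mkQ (p i.val (if h : i.val ∈ s then σ1 i.val
          else σ2 ⟨i.val, Finset.mem_compl.2 h⟩))) =
        fun i : {x // x ∈ sᶜ} => W.mkQ (p i.val (σ2 i)) := by
      funext i
      rw [dif_neg (Finset.mem_compl.1 i.2)]
    rw [he]
    exact hσ2
/-- Full equivalence (*) ⇔ (**) of Conjecture 4.1 of the paper when `dim V = r`. -/
theorem stmt2 {K V : Type*} [Field K] [AddCommGroup V] [Module K V]
    [FiniteDimensional K V]
    (r : ℕ) (hr : 1 ≤ r) (hdim : Module.finrank K V = r)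
    (p : Fin r → Bool → V)
    (hspan : Submodule.span K (Set.range fun x : Fin r × Bool => p x.1 x.2) = ⊤) :
    (∀ σ : Fin r → Bool, ¬ LinearIndependent K (fun i : Fin r => p i (σ i))) ↔
    (∃ I : Finset (Fin r), I.card < r ∧
      Module.finrank K
        (Submodule.span K {v : V | ∃ i ∈ I, ∃ j : Bool, p i j = v}) < I.card) := by
  constructor
  · intro h
    by_contra hI
    push_neg at hI
    have hp : ∀ s : Finset (Fin r),
        s.card ≤ finrank K (span K {v : V | ∃ i ∈ s, ∃ b, p i b = v}) := by
      intro s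
      rcases lt_or_ge s.card r with hlt | hge
      · exact hI s hlt
      · have hcard : s.card = r := le_antisymm (by simpa using Finset.card_le_univ s) hge
        have huniv : s = Finset.univ := by
          rw [← Finset.card_eq_iff_eq_univ]
          simpa using hcard
        subst huniv
        have hset : {v : V | ∃ i ∈ (Finset.univ : Finset (Fin r)), ∃ b, p i b = v} =
            Set.range fun x : Fin r × Bool => p x.1 x.2 := by
          ext v
          simp only [Set.mem_setOf_eq, Finset.mem_univ, true_and, Set.mem_range]
          constructor
          · rintro ⟨i, b, e⟩; exact ⟨(i, b), e⟩
          · rintro ⟨⟨i, b⟩, e⟩; exact ⟨i, b, e⟩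
        rw [hset, hspan]
        rw [finrank_top, hdim, hcard]
    obtain ⟨σ, hσ⟩ := aux_rado K r V (Fin r) (by simp) p hp
    exact h σ hσ
  · rintro ⟨I, hIr, hIdim⟩ σ hind
    set S : Set V := {v : V | ∃ i ∈ I, ∃ j : Bool, p i j = v} with hS
    have hw : LinearIndependent K fun i : {x // x ∈ I} => p i.val (σ i.val) :=
      hind.comp Subtype.val Subtype.val_injective
    have hmem : ∀ i : {x // x ∈ I}, p i.val (σ i.val) ∈ span K S :=
      fun i => subset_span ⟨i.val, i.2, σ i.val, rfl⟩
    have hw' : LinearIndependent K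
        fun i : {x // x ∈ I} => (⟨p i.val (σ i.val), hmem i⟩ : span K S) := by
      apply LinearIndependent.of_comp (span K S).subtype
      exact hw
    have hcard := hw'.fintype_card_le_finrank
    rw [Fintype.card_coe] at hcard
    omega
end

section
/- Let V be a vector space of dimension r over a field, and for each i ∈ {1,…,r} let P_i ⊆ V be a nonzero subspace of dimension at most 2. Suppose that for every nonempty subset I ⊆ {1,…,r} the span of the subspaces {P_i : i ∈ I} has dimension at least |I| (a Hall-type condition). Then for any choice of spanning vectors p_i, p_i' of each P_i, there exists a choice function σ selecting v_i ∈ {p_i, p_i'} for each i such that (v_1,…,v_r) is a basis of V. -/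
/-!
Rado's theorem for vectors, by induction on the number of indices. If some proper nonempty set
`I` of indices is critical, i.e. the span `W` of its sets has dimension exactly `#I`, solve the
problem for `I` in `V` and for the other indices in `V ⧸ W`: since `dim W = #I`, the quotient
family still satisfies Rado's condition, and the two independent families glue together.
Otherwise every proper subset has a spare dimension, so one may fix any nonzero vector `v` of one
set and pass to `V ⧸ K ∙ v`, which costs at most one dimension.
-/

open Submodule Module Finset

section

variable {K V ι : Type*} [Field K] [AddCommGroup V] [Module K V]

theorem Submodule.finrank_map_mkQ_add_finrank [FiniteDimensional K V] (W X : Submodule K V) :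
    finrank K (X.map W.mkQ) + finrank K W = finrank K ↥(X ⊔ W) := by
  have h := (W.mkQ.domRestrict (X ⊔ W)).finrank_range_add_finrank_ker
  rwa [LinearMap.range_domRestrict, Submodule.map_sup, mkQ_map_self, sup_bot_eq,
    LinearMap.ker_domRestrict, ker_mkQ, (comapSubtypeEquivOfLe le_sup_right).finrank_eq] at h

theorem LinearIndepOn.union_of_quotient_of_image_subset {W : Submodule K V} {s t : Set ι}
    {f : ι → V} (hs : LinearIndepOn K f s) (hsW : f '' s ⊆ W)
    (ht : LinearIndepOn K (W.mkQ ∘ f) t) : LinearIndepOn K f (s ∪ t) :=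
  hs.union_of_quotient <| ht.of_comp ((span K (f '' s)).mapQ W LinearMap.id (span_le.2 hsW))

variable (K) in
def RadoCondition (A : ι → Set V) (s : Finset ι) : Prop :=
  ∀ I ⊆ s, #I ≤ finrank K ↥(I.sup fun i => span K (A i))

namespace RadoCondition

variable {A : ι → Set V} {s : Finset ι}

theorem mono {t : Finset ι} (h : RadoCondition K A s) (hts : t ⊆ s) : RadoCondition K A t :=
  fun I hI => h I (hI.trans hts)

theorem exists_mem_ne_zero (h : RadoCondition K A s) {i : ι} (hi : i ∈ s) :
    ∃ v ∈ A i, v ≠ 0 := by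
  by_contra! hA
  have := h {i} (singleton_subset_iff.2 hi)
  rw [sup_singleton, span_eq_bot.2 hA, finrank_bot, card_singleton] at this
  omega

theorem image_mkQ [FiniteDimensional K V] {W : Submodule K V}
    (hW : ∀ J ⊆ s, #J + finrank K W ≤ finrank K ↥((J.sup fun i => span K (A i)) ⊔ W)) :
    RadoCondition K (fun i => W.mkQ '' A i) s := by
  intro J hJ
  have hmap : (J.sup fun i => span K (W.mkQ '' A i)) =
      (J.sup fun i => span K (A i)).map W.mkQ := by
    rw [apply_sup_eq_sup_comp _ (fun _ _ => Submodule.map_sup _ _ _) (Submodule.map_bot _)]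
    simp only [Function.comp_def, map_span]
  have := hW J hJ
  have := finrank_map_mkQ_add_finrank W (J.sup fun i => span K (A i))
  rw [hmap]
  omega

theorem image_mkQ_of_critical [DecidableEq ι] [FiniteDimensional K V] (h : RadoCondition K A s)
    {I : Finset ι} (hIs : I ⊆ s) (hI : finrank K ↥(I.sup fun i => span K (A i)) ≤ #I) :
    RadoCondition K (fun i => (I.sup fun i => span K (A i)).mkQ '' A i) (s \ I) :=
  image_mkQ fun J hJ => by
    rw [le_antisymm hI (h I hIs), ← card_union_of_disjoint (disjoint_of_subset_left hJ
      sdiff_disjoint), ← sup_union]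
    exact h _ (union_subset (hJ.trans sdiff_subset) hIs)

theorem image_mkQ_span_singleton [DecidableEq ι] [FiniteDimensional K V]
    (hslack : ∀ I ⊂ s, I.Nonempty → #I < finrank K ↥(I.sup fun i => span K (A i)))
    {i₀ : ι} (hi₀ : i₀ ∈ s) {v : V} (hv : v ≠ 0) :
    RadoCondition K (fun i => (K ∙ v).mkQ '' A i) (s.erase i₀) :=
  image_mkQ fun J hJ => by
    rcases J.eq_empty_or_nonempty with rfl | hJne
    · simpa using finrank_mono (le_sup_right : K ∙ v ≤ _)
    have := hslack J (hJ.trans_ssubset (erase_ssubset hi₀)) hJne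
    have := finrank_mono (le_sup_left : (J.sup fun i => span K (A i)) ≤ _ ⊔ K ∙ v)
    rw [finrank_span_singleton hv]
    omega

end RadoCondition

theorem exists_linearIndepOn_union_of_quotient [DecidableEq ι] {A : ι → Set V}
    {W : Submodule K V} {s t : Finset ι} (hst : Disjoint s t) {f₁ : ι → V}
    (hf₁A : ∀ i ∈ s, f₁ i ∈ A i) (hf₁W : ∀ i ∈ s, f₁ i ∈ W) (hf₁ : LinearIndepOn K f₁ s)
    {g : ι → V ⧸ W} (hgA : ∀ i ∈ t, g i ∈ W.mkQ '' A i) (hg : LinearIndepOn K g t) :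
    ∃ f : ι → V, (∀ i ∈ s ∪ t, f i ∈ A i) ∧ LinearIndepOn K f ↑(s ∪ t) := by
  choose! f₂ hf₂A hf₂g using hgA
  refine ⟨s.piecewise f₁ f₂, fun i hi => ?_, ?_⟩
  · rcases mem_union.1 hi with hi | hi
    · simpa [hi] using hf₁A i hi
    · simpa [disjoint_right.1 hst hi] using hf₂A i hi
  rw [coe_union]
  refine (hf₁.congr fun i hi => ?_).union_of_quotient_of_image_subset ?_
    (hg.congr fun i hi => ?_)
  · simp [mem_coe.1 hi]
  · rintro _ ⟨i, hi, rfl⟩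
    simpa [mem_coe.1 hi] using hf₁W i hi
  · simp [disjoint_right.1 hst hi, hf₂g i hi]

theorem exists_linearIndepOn_of_radoCondition [FiniteDimensional K V] {A : ι → Set V}
    {s : Finset ι} (h : RadoCondition K A s) :
    ∃ f : ι → V, (∀ i ∈ s, f i ∈ A i) ∧ LinearIndepOn K f s := by
  classical
  induction s using Finset.strongInduction generalizing V with | H s ih =>
  rcases s.eq_empty_or_nonempty with rfl | ⟨i₀, hi₀⟩
  · exact ⟨0, by simp, by simp⟩
  by_cases hcritical : ∃ I ⊂ s, I.Nonempty ∧ finrank K ↥(I.sup fun i => span K (A i)) ≤ #I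
  · obtain ⟨I, hIs, hI, hIle⟩ := hcritical
    obtain ⟨f₁, hf₁A, hf₁⟩ := ih I hIs (h.mono hIs.subset)
    obtain ⟨g, hgA, hg⟩ :=
      ih (s \ I) (sdiff_ssubset hIs.subset hI) (h.image_mkQ_of_critical hIs.subset hIle)
    have hf₁W (i) (hi : i ∈ I) : f₁ i ∈ I.sup fun i => span K (A i) :=
      le_sup (f := fun i => span K (A i)) hi (subset_span (hf₁A i hi))
    simpa [union_sdiff_of_subset hIs.subset] using
      exists_linearIndepOn_union_of_quotient disjoint_sdiff hf₁A hf₁W hf₁ hgA hg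
  · push Not at hcritical
    obtain ⟨v, hvA, hv⟩ := h.exists_mem_ne_zero hi₀
    obtain ⟨g, hgA, hg⟩ :=
      ih (s.erase i₀) (erase_ssubset hi₀) (RadoCondition.image_mkQ_span_singleton hcritical hi₀ hv)
    simpa [insert_erase hi₀] using
      exists_linearIndepOn_union_of_quotient (W := K ∙ v) (s := {i₀}) (f₁ := fun _ => v) (by simp)
        (by simpa using hvA) (by simp [mem_span_singleton_self])
        (by simpa [linearIndepOn_singleton_iff] using hv) hgA hg

end

theorem stmt3_general {K V : Type*} [Field K] [AddCommGroup V] [Module K V]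
    [FiniteDimensional K V]
    (r : ℕ) (hdim : Module.finrank K V = r)
    (P : Fin r → Submodule K V)
    (hall : ∀ I : Finset (Fin r), I.Nonempty →
      I.card ≤ Module.finrank K (↥(⨆ i ∈ I, P i)))
    (p p' : Fin r → V)
    (hgen : ∀ i, Submodule.span K {p i, p' i} = P i) :
    ∃ σ : Fin r → Bool,
      LinearIndependent K (fun i : Fin r => if σ i then p i else p' i) ∧
      Submodule.span K (Set.range fun i : Fin r => if σ i then p i else p' i) = ⊤ := by
  have hrado : RadoCondition K (fun i => {p i, p' i}) univ := fun I _ => by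
    rcases I.eq_empty_or_nonempty with rfl | hI
    · simp
    have hsup : (I.sup fun i => span K {p i, p' i}) = ⨆ i ∈ I, P i := by
      simp only [Finset.sup_eq_iSup, hgen]
    exact hsup ▸ hall I hI
  obtain ⟨f, hfA, hf⟩ := exists_linearIndepOn_of_radoCondition hrado
  rw [coe_univ, linearIndepOn_univ_iff] at hf
  have hchoice (i) : ∃ b : Bool, (if b then p i else p' i) = f i := by
    rcases hfA i (mem_univ i) with h | h
    exacts [⟨true, h.symm⟩, ⟨false, h.symm⟩]
  choose σ hσ using hchoice
  refine ⟨σ, ?_⟩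
  simp only [hσ]
  exact ⟨hf, hf.span_eq_top_of_card_eq_finrank' (by rw [Fintype.card_fin, hdim])⟩

/-- Hall-condition (contrapositive) form of Theorem A.1: if the nonzero
subspaces `P i` (each of dimension at most 2) satisfy the Hall condition, then
from any pair of spanning vectors of each `P i` one can choose a transversal
family which is a basis of `V`. -/
theorem stmt3 {K V : Type*} [Field K] [AddCommGroup V] [Module K V]
    [FiniteDimensional K V]
    (r : ℕ) (hr : 1 ≤ r) (hdim : Module.finrank K V = r)
    (P : Fin r → Submodule K V)
    (hne : ∀ i, P i ≠ ⊥)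
    (hd2 : ∀ i, Module.finrank K (P i) ≤ 2)
    (hall : ∀ I : Finset (Fin r), I.Nonempty →
      I.card ≤ Module.finrank K (↥(⨆ i ∈ I, P i)))
    (p p' : Fin r → V)
    (hgen : ∀ i, Submodule.span K {p i, p' i} = P i) :
    ∃ σ : Fin r → Bool,
      LinearIndependent K (fun i : Fin r => if σ i then p i else p' i) ∧
      Submodule.span K (Set.range fun i : Fin r => if σ i then p i else p' i) = ⊤ :=
  stmt3_general r hdim P hall p p' hgen
end

section
/- Let V be a finite-dimensional vector space and let v = (v_1,…,v_r) be a family with v_i ∈ {p_{i,+}, p_{i,-}} for each i, chosen so that ρ := dim span{v_1,…,v_r} is maximal among all such choice families. Let w ⊆ {v_1,…,v_r} ∪ {v_1',…,v_r'} be a subset of cardinality ρ that spans span v, uses each index i at most once, and is contained in span v (where v_i' denotes the other member of the i-th pair). Then for every index i not used by w, the subspace P_i = span{p_{i,+}, p_{i,-}} is contained in span w. -/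
/-- Lemma A.3 ("maxspancontainspi"): let `v = (p i (c i))` be a choice family
of maximal rank `ρ`, and let `w` (encoded by the finset `S` of index/sign
pairs, using each index at most once) be a spanning set for `v`: it has
cardinality `ρ`, its vectors lie in `span v`, and they span `span v`.  Then
for every index `i` not used by `w`, the plane `P i = span {p i +, p i -}` is
contained in `span w`. -/
theorem stmt5 {K V : Type*} [Field K] [AddCommGroup V] [Module K V]
    [FiniteDimensional K V]
    (r : ℕ) (p : Fin r → Bool → V) (c : Fin r → Bool)
    (ρ : ℕ)
    (hρ : ρ = Module.finrank K
      (Submodule.span K (Set.range fun i : Fin r => p i (c i))))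
    (hmax : ∀ c' : Fin r → Bool,
      Module.finrank K
        (Submodule.span K (Set.range fun i : Fin r => p i (c' i))) ≤ ρ)
    (S : Finset (Fin r × Bool))
    (hinj : ∀ a ∈ S, ∀ b ∈ S, Prod.fst a = Prod.fst b → a = b)
    (hcard : S.card = ρ)
    (hsub : ∀ a ∈ S, p a.1 a.2 ∈
      Submodule.span K (Set.range fun i : Fin r => p i (c i)))
    (hspan : Submodule.span K ((fun a : Fin r × Bool => p a.1 a.2) '' ↑S) =
      Submodule.span K (Set.range fun i : Fin r => p i (c i)))
    (i : Fin r) (hi : i ∉ S.image Prod.fst) :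
    Submodule.span K {p i true, p i false} ≤
      Submodule.span K ((fun a : Fin r × Bool => p a.1 a.2) '' ↑S) := by
  classical
  set W := Submodule.span K ((fun a : Fin r × Bool => p a.1 a.2) '' ↑S) with hW
  -- it suffices to show each p i b ∈ W
  have key : ∀ b : Bool, p i b ∈ W := by
    intro b
    by_contra hb
    -- build a new choice family using the signs of S, and b at index i
    set c' : Fin r → Bool := fun j =>
      if h : ∃ s, (j, s) ∈ S then h.choose else if j = i then b else c j with hc'
    have hc'S : ∀ a ∈ S, c' a.1 = a.2 := by
      intro a ha
      have h : ∃ s, (a.1, s) ∈ S := ⟨a.2, ha⟩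
      have heq := hinj _ h.choose_spec _ ha rfl
      show (if h : ∃ s, (a.1, s) ∈ S then h.choose else if a.1 = i then b else c a.1) = a.2
      rw [dif_pos h]
      exact (Prod.mk.injEq _ _ _ _).mp heq |>.2
    have hc'i : c' i = b := by
      have h : ¬ ∃ s, (i, s) ∈ S := by
        rintro ⟨s, hs⟩
        exact hi (Finset.mem_image.mpr ⟨(i, s), hs, rfl⟩)
      show (if h : ∃ s, (i, s) ∈ S then h.choose else if i = i then b else c i) = b
      rw [dif_neg h, if_pos rfl]
    set W' := Submodule.span K (Set.range fun j : Fin r => p j (c' j)) with hW'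
    have hle : W ≤ W' := by
      rw [hW]
      apply Submodule.span_le.mpr
      rintro x ⟨a, ha, rfl⟩
      apply Submodule.subset_span
      exact ⟨a.1, by simp only [hc'S a ha]⟩
    have hmem : p i b ∈ W' := by
      apply Submodule.subset_span
      exact ⟨i, by simp only [hc'i]⟩
    have hlt : W < W' := lt_of_le_of_ne hle (fun he => hb (he.symm ▸ hmem))
    have h1 : Module.finrank K W < Module.finrank K W' :=
      Submodule.finrank_lt_finrank_of_lt hlt
    have h2 : Module.finrank K W = ρ := by rw [hspan, ← hρ]
    have h3 : Module.finrank K W' ≤ ρ := hmax c'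
    omega
  apply Submodule.span_le.mpr
  rintro x hx
  rcases hx with rfl | hx
  · exact key true
  · rcases hx with rfl
    exact key false
end
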